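/- Let d ≥ 2 be an integer and let α ∈ (0, 2/(d+1)). Set β = (2 + α(d−1))/(4d) and C₀ = (2^{(d−1)/2} κ_{d−1} / (d κ_d²))^{1/(2d)}, and for λ > 0 set u_λ = C₀ λ^β. Then there exists a constant C > 0 (depending only on d and α) such that for all λ ≥ 1 and all h ∈ [0, u_λ²), φ_{λ,α,u_λ}(h) ≤ C · h^{(d−1)/2}. -/

import Mathlib

open MeasureTheory Real Filter

/-- `kappa j` is the Lebesgue volume of the unit ball in `ℝ^j`. -/
noncomputable def kappa (j : ℕ) : ℝ :=
  (volume (Metric.ball (0 : EuclideanSpace ℝ (Fin j)) 1)).toReal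

/-- Normalized surface area `s₁` of a spherical cap of height `h` (equals `1` for `h > 2`). -/
noncomputable def s1 (d : ℕ) (h : ℝ) : ℝ :=
  if h ≤ 2 then
    (((d : ℝ) - 1) * kappa (d - 1) / ((d : ℝ) * kappa d)) *
      ∫ θ in (0:ℝ)..(Real.arccos (1 - h)), (Real.sin θ) ^ (d - 2)
  else 1

/-- The function `g_{λ,α,u}(h)`. -/
noncomputable def gfun (lam al u h : ℝ) : ℝ :=
  min (max ((lam ^ al / u ^ 2 * h - (1 / 2) * (1 + lam ^ al) / u ^ 4 * h ^ 2) /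
      (1 - h / u ^ 2)) 0) 2

/-- The density `φ_{λ,α,u}(h)`. -/
noncomputable def phi (d : ℕ) (lam al u h : ℝ) : ℝ :=
  lam * (1 + lam ^ al) ^ d / u ^ (d + 1) / (kappa d * lam ^ ((d : ℝ) * al)) *
    s1 d (gfun lam al u h) * (1 - h / u ^ 2) ^ (d - 1)


/-!
Since `cos θ ≤ 1 - 2θ²/π²` on `[0, π]` and `sin θ ≤ θ`, a cap of height `g` has normalized
area `s₁(g) ≤ κ_{d-1}/(d κ_d) · (π² g/2)^{(d-1)/2}`. With `t = h/u²` the clamp gives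
`g ≤ λ^α t/(1-t)`, and the factor `(1-t)^{d-1}` of `φ` absorbs the resulting `(1-t)^{-(d-1)/2}`.
What remains is `h^{(d-1)/2}` times `(1+λ^α)^d/λ^{dα} ≤ 2^d` times `λ^{1+α(d-1)/2}/u^{2d}`,
and the choice of `u_λ` makes the last factor the constant `C₀^{-2d}`; altogether
`C = 2π^{d-1}` works.
-/

lemma kappa_pos (j : ℕ) : 0 < kappa j :=
  ENNReal.toReal_pos (Metric.measure_ball_pos _ _ one_pos).ne' measure_ball_lt_top.ne

lemma integral_sin_pow_le {T : ℝ} (hT0 : 0 ≤ T) (hTπ : T ≤ π) (n : ℕ) :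
    ∫ θ in (0 : ℝ)..T, sin θ ^ n ≤ T ^ (n + 1) / (n + 1) := by
  calc ∫ θ in (0 : ℝ)..T, sin θ ^ n
      ≤ ∫ θ in (0 : ℝ)..T, θ ^ n := by
        refine intervalIntegral.integral_mono_on hT0 ((continuous_sin.pow _).intervalIntegrable _ _)
          ((continuous_pow _).intervalIntegrable _ _) fun θ hθ => ?_
        exact pow_le_pow_left₀ (sin_nonneg_of_nonneg_of_le_pi hθ.1 (hθ.2.trans hTπ))
          (sin_le hθ.1) _
    _ = T ^ (n + 1) / (n + 1) := by simp [integral_pow]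

lemma arccos_one_sub_sq_le {g : ℝ} (hg0 : 0 ≤ g) (hg2 : g ≤ 2) :
    arccos (1 - g) ^ 2 ≤ π ^ 2 / 2 * g := by
  have hcos := cos_le_one_sub_mul_cos_sq (x := arccos (1 - g))
    (by rw [abs_of_nonneg (arccos_nonneg _)]; exact arccos_le_pi _)
  rw [cos_arccos (by linarith) (by linarith)] at hcos
  have hπ : 0 < π ^ 2 := by positivity
  rw [div_mul_eq_mul_div] at hcos
  have := (div_le_iff₀ hπ).1 (show 2 * arccos (1 - g) ^ 2 / π ^ 2 ≤ g by linarith)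
  linarith

lemma s1_le_rpow {d : ℕ} (hd : 2 ≤ d) {g : ℝ} (hg0 : 0 ≤ g) (hg2 : g ≤ 2) :
    s1 d g ≤ kappa (d - 1) / (d * kappa d) * (π ^ 2 / 2 * g) ^ (((d : ℝ) - 1) / 2) := by
  set T := arccos (1 - g)
  have hd1 : ((d - 2 : ℕ) : ℝ) + 1 = (d : ℝ) - 1 := by
    rw [Nat.cast_sub hd]; push_cast; ring
  have hd2 : (2 : ℝ) ≤ d := by exact_mod_cast hd
  have hT : T ^ (d - 1) ≤ (π ^ 2 / 2 * g) ^ (((d : ℝ) - 1) / 2) := by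
    have hsq : T ^ (d - 1) = (T ^ 2) ^ (((d : ℝ) - 1) / 2) := by
      rw [← rpow_natCast, ← rpow_natCast T 2, ← rpow_mul (arccos_nonneg _),
        Nat.cast_sub (by omega : 1 ≤ d)]
      norm_num [mul_div_cancel₀, T]
    rw [hsq]
    exact rpow_le_rpow (sq_nonneg _) (arccos_one_sub_sq_le hg0 hg2) (by linarith)
  have hint := integral_sin_pow_le (arccos_nonneg (1 - g)) (arccos_le_pi _) (d - 2)
  rw [hd1, show d - 2 + 1 = d - 1 by omega] at hint
  have hd0 : (0 : ℝ) < (d : ℝ) - 1 := by linarith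
  have hk := kappa_pos d
  have hk1 := kappa_pos (d - 1)
  rw [s1, if_pos hg2]
  calc ((d : ℝ) - 1) * kappa (d - 1) / (d * kappa d) * ∫ θ in (0 : ℝ)..T, sin θ ^ (d - 2)
      ≤ ((d : ℝ) - 1) * kappa (d - 1) / (d * kappa d) * (T ^ (d - 1) / ((d : ℝ) - 1)) := by
        gcongr
    _ = kappa (d - 1) / (d * kappa d) * T ^ (d - 1) := by field_simp
    _ ≤ _ := by gcongr

lemma gfun_nonneg (lam al u h : ℝ) : 0 ≤ gfun lam al u h :=
  le_min (le_max_right _ _) zero_le_two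

lemma gfun_le_two (lam al u h : ℝ) : gfun lam al u h ≤ 2 :=
  min_le_right _ _

lemma gfun_le {lam al u h : ℝ} (ha : 0 ≤ lam ^ al) (hh0 : 0 ≤ h) (hhu : h < u ^ 2) :
    gfun lam al u h ≤ lam ^ al * (h / u ^ 2) / (1 - h / u ^ 2) := by
  have hu2 : 0 < u ^ 2 := hh0.trans_lt hhu
  have ht : 0 < 1 - h / u ^ 2 := sub_pos.2 ((div_lt_one hu2).2 hhu)
  refine (min_le_left _ _).trans (max_le ?_ (by positivity))
  gcongr
  have : 0 ≤ 1 / 2 * (1 + lam ^ al) / u ^ 4 * h ^ 2 := by positivity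
  linarith [show lam ^ al / u ^ 2 * h = lam ^ al * (h / u ^ 2) by ring]

lemma div_rpow_half_mul_pow_le {x s : ℝ} (hx : 0 ≤ x) (hs0 : 0 < s) (hs1 : s ≤ 1) (n : ℕ) :
    (x / s) ^ ((n : ℝ) / 2) * s ^ n ≤ x ^ ((n : ℝ) / 2) := by
  have hsplit : s ^ n = s ^ ((n : ℝ) / 2) * s ^ ((n : ℝ) / 2) := by
    rw [← rpow_add hs0, add_halves, rpow_natCast]
  have hs : s ^ ((n : ℝ) / 2) ≤ 1 := rpow_le_one hs0.le hs1 (by positivity)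
  have hs' : 0 < s ^ ((n : ℝ) / 2) := rpow_pos_of_pos hs0 _
  rw [div_rpow hx hs0.le, hsplit, div_mul_eq_mul_div, mul_div_assoc,
    mul_div_cancel_right₀ _ hs'.ne']
  exact mul_le_of_le_one_right (rpow_nonneg hx _) hs

lemma s1_gfun_mul_le {d : ℕ} (hd : 2 ≤ d) {lam al u h : ℝ} (ha : 0 ≤ lam ^ al)
    (hh0 : 0 ≤ h) (hhu : h < u ^ 2) :
    s1 d (gfun lam al u h) * (1 - h / u ^ 2) ^ (d - 1) ≤
      kappa (d - 1) / (d * kappa d) *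
        (π ^ 2 / 2 * (lam ^ al * (h / u ^ 2))) ^ (((d : ℝ) - 1) / 2) := by
  set t := h / u ^ 2
  have hu2 : 0 < u ^ 2 := hh0.trans_lt hhu
  have ht0 : 0 ≤ t := div_nonneg hh0 hu2.le
  have ht : 0 < 1 - t := sub_pos.2 ((div_lt_one hu2).2 hhu)
  have hp : ((d : ℝ) - 1) / 2 = ((d - 1 : ℕ) : ℝ) / 2 := by
    rw [Nat.cast_sub (by omega : 1 ≤ d), Nat.cast_one]
  have hk1 := kappa_pos (d - 1)
  have hk := kappa_pos d
  calc s1 d (gfun lam al u h) * (1 - t) ^ (d - 1)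
      ≤ kappa (d - 1) / (d * kappa d) *
          (π ^ 2 / 2 * (lam ^ al * t / (1 - t))) ^ (((d : ℝ) - 1) / 2) * (1 - t) ^ (d - 1) := by
        have hg := gfun_nonneg lam al u h
        have hp0 : 0 ≤ ((d : ℝ) - 1) / 2 := by rw [hp]; positivity
        gcongr
        exact (s1_le_rpow hd hg (gfun_le_two ..)).trans (by gcongr; exact gfun_le ha hh0 hhu)
    _ = kappa (d - 1) / (d * kappa d) * ((π ^ 2 / 2 * (lam ^ al * t) / (1 - t)) ^
          (((d - 1 : ℕ) : ℝ) / 2) * (1 - t) ^ (d - 1)) := by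
        rw [← hp, mul_assoc, mul_div_assoc (π ^ 2 / 2)]
    _ ≤ _ := by
        rw [hp]
        gcongr
        exact div_rpow_half_mul_pow_le (by positivity) ht (by linarith) _

lemma phi_le_rpow {d : ℕ} (hd : 2 ≤ d) {lam al u h : ℝ} (hlam : 0 < lam) (hu : 0 < u)
    (hh0 : 0 ≤ h) (hhu : h < u ^ 2) :
    phi d lam al u h ≤ kappa (d - 1) / (d * kappa d ^ 2) * (π ^ 2 / 2) ^ (((d : ℝ) - 1) / 2) *
      ((1 + lam ^ al) ^ d / lam ^ ((d : ℝ) * al)) *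
      (lam ^ (1 + al * (((d : ℝ) - 1) / 2)) / u ^ (2 * d)) * h ^ (((d : ℝ) - 1) / 2) := by
  set p := ((d : ℝ) - 1) / 2
  have ha : 0 < lam ^ al := rpow_pos_of_pos hlam al
  have hk := kappa_pos d
  have hpow : (π ^ 2 / 2 * (lam ^ al * (h / u ^ 2))) ^ p =
      (π ^ 2 / 2) ^ p * lam ^ (al * p) * h ^ p / u ^ (d - 1) := by
    have hu2p : (u ^ 2) ^ p = u ^ (d - 1) := by
      rw [← rpow_natCast, ← rpow_mul hu.le, ← rpow_natCast, Nat.cast_sub (by omega : 1 ≤ d)]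
      norm_num [p, mul_div_cancel₀]
    rw [mul_rpow (by positivity) (by positivity), mul_rpow ha.le (by positivity),
      div_rpow hh0 (by positivity), hu2p, ← rpow_mul hlam.le]
    ring
  have hscale : lam ^ (1 + al * p) / u ^ (2 * d) =
      lam * lam ^ (al * p) / (u ^ (d + 1) * u ^ (d - 1)) := by
    rw [rpow_add hlam, rpow_one, ← pow_add, show d + 1 + (d - 1) = 2 * d by omega]
  calc phi d lam al u h
      = lam * (1 + lam ^ al) ^ d / u ^ (d + 1) / (kappa d * lam ^ ((d : ℝ) * al)) *
          (s1 d (gfun lam al u h) * (1 - h / u ^ 2) ^ (d - 1)) := mul_assoc ..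
    _ ≤ lam * (1 + lam ^ al) ^ d / u ^ (d + 1) / (kappa d * lam ^ ((d : ℝ) * al)) *
          (kappa (d - 1) / (d * kappa d) * (π ^ 2 / 2 * (lam ^ al * (h / u ^ 2))) ^ p) := by
        have := rpow_pos_of_pos hlam ((d : ℝ) * al)
        exact mul_le_mul_of_nonneg_left (s1_gfun_mul_le hd ha.le hh0 hhu) (by positivity)
    _ = _ := by
        rw [hpow, hscale]
        field_simp

lemma critical_scale_pow_two_mul {K lam : ℝ} (hK : 0 ≤ K) (hlam : 0 ≤ lam) {d : ℕ}
    (hd : d ≠ 0) (al : ℝ) :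
    (K ^ ((1 : ℝ) / (2 * d)) * lam ^ ((2 + al * ((d : ℝ) - 1)) / (4 * d))) ^ (2 * d) =
      K * lam ^ (1 + al * (((d : ℝ) - 1) / 2)) := by
  have hd' : (d : ℝ) ≠ 0 := by exact_mod_cast hd
  rw [mul_pow, ← rpow_natCast, ← rpow_mul hK, ← rpow_natCast, ← rpow_mul hlam]
  congr 2
  · push_cast; field_simp; exact rpow_one K
  · push_cast; field_simp; ring

lemma one_add_rpow_pow_div_le {lam al : ℝ} (hlam : 1 ≤ lam) (hal : 0 ≤ al) (d : ℕ) :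
    (1 + lam ^ al) ^ d / lam ^ ((d : ℝ) * al) ≤ 2 ^ d := by
  have ha : 1 ≤ lam ^ al := one_le_rpow hlam hal
  rw [mul_comm, rpow_mul (by linarith), rpow_natCast, div_le_iff₀ (by positivity), ← mul_pow]
  gcongr
  linarith

theorem phi_upper_bound_pos_subcritical_general (d : ℕ) (hd : 2 ≤ d) (al : ℝ)
    (hal0 : 0 < al) :
    ∃ C > 0, ∀ lam : ℝ, 1 ≤ lam → ∀ h : ℝ, 0 ≤ h →
      h < (((2 : ℝ) ^ (((d : ℝ) - 1) / 2) * kappa (d - 1) / ((d : ℝ) * kappa d ^ 2)) ^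
              ((1 : ℝ) / (2 * (d : ℝ))) *
            lam ^ ((2 + al * ((d : ℝ) - 1)) / (4 * (d : ℝ)))) ^ 2 →
      phi d lam al
          (((2 : ℝ) ^ (((d : ℝ) - 1) / 2) * kappa (d - 1) / ((d : ℝ) * kappa d ^ 2)) ^
              ((1 : ℝ) / (2 * (d : ℝ))) *
            lam ^ ((2 + al * ((d : ℝ) - 1)) / (4 * (d : ℝ)))) h ≤
        C * h ^ (((d : ℝ) - 1) / 2) := by
  set p := ((d : ℝ) - 1) / 2
  set K := (2 : ℝ) ^ p * kappa (d - 1) / ((d : ℝ) * kappa d ^ 2)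
  have hk1 := kappa_pos (d - 1)
  have hk := kappa_pos d
  have hK : 0 < K := by positivity
  have hconst :
      kappa (d - 1) / (d * kappa d ^ 2) * (π ^ 2 / 2) ^ p / K = (π / 2) ^ (d - 1) := by
    rw [show K = 2 ^ p * (kappa (d - 1) / (d * kappa d ^ 2)) by ring, mul_comm (2 ^ p),
      ← div_div, mul_div_cancel_left₀ _ (by positivity),
      ← div_rpow (by positivity) zero_le_two,
      show π ^ 2 / 2 / 2 = (π / 2) ^ 2 by ring, ← rpow_natCast, ← rpow_mul (by positivity),
      ← rpow_natCast, Nat.cast_sub (by omega : 1 ≤ d)]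
    norm_num [p, mul_div_cancel₀]
  refine ⟨2 * π ^ (d - 1), by positivity, fun lam hlam h hh0 hhu => ?_⟩
  have hlam0 : 0 < lam := one_pos.trans_le hlam
  calc phi d lam al _ h
      ≤ _ := phi_le_rpow hd hlam0 (by positivity) hh0 hhu
    _ ≤ kappa (d - 1) / (d * kappa d ^ 2) * (π ^ 2 / 2) ^ p * 2 ^ d * K⁻¹ * h ^ p := by
        rw [critical_scale_pow_two_mul hK.le hlam0.le (by omega),
          div_mul_cancel_right₀ (by positivity)]
        gcongr _ * ?_ * _ * _
        exact one_add_rpow_pow_div_le hlam hal0.le d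
    _ = 2 * π ^ (d - 1) * h ^ p := by
        rw [mul_right_comm _ (2 ^ d), ← div_eq_mul_inv, hconst, div_pow,
          show (2 : ℝ) ^ d = 2 * 2 ^ (d - 1) by rw [← pow_succ', Nat.sub_add_cancel (by omega)]]
        field_simp

/-- for `α ∈ (0, 2/(d+1))`, `β = (2+α(d-1))/(4d)`,
`C₀ = (2^{(d-1)/2} κ_{d-1}/(d κ_d²))^{1/(2d)}` and `u_λ = C₀ λ^β`, there is a constant
`C > 0` (depending only on `d` and `α`) with `φ_{λ,α,u_λ}(h) ≤ C h^{(d-1)/2}` for all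
`λ ≥ 1` and `h ∈ [0, u_λ²)`. -/
theorem phi_upper_bound_pos_subcritical (d : ℕ) (hd : 2 ≤ d) (al : ℝ)
    (hal0 : 0 < al) (hal1 : al < 2 / ((d : ℝ) + 1)) :
    ∃ C > 0, ∀ lam : ℝ, 1 ≤ lam → ∀ h : ℝ, 0 ≤ h →
      h < (((2 : ℝ) ^ (((d : ℝ) - 1) / 2) * kappa (d - 1) / ((d : ℝ) * kappa d ^ 2)) ^
              ((1 : ℝ) / (2 * (d : ℝ))) *
            lam ^ ((2 + al * ((d : ℝ) - 1)) / (4 * (d : ℝ)))) ^ 2 →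
      phi d lam al
          (((2 : ℝ) ^ (((d : ℝ) - 1) / 2) * kappa (d - 1) / ((d : ℝ) * kappa d ^ 2)) ^
              ((1 : ℝ) / (2 * (d : ℝ))) *
            lam ^ ((2 + al * ((d : ℝ) - 1)) / (4 * (d : ℝ)))) h ≤
        C * h ^ (((d : ℝ) - 1) / 2) :=
  phi_upper_bound_pos_subcritical_general d hd al hal0
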